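/- arXiv:1802.00532 — 3 statements merged into one kernel-verified Lean document; each statement's English description precedes it below -/
import Mathlib

section
/- Fix $a \geq 0$ and $m \geq 0$. For each $n \geq 0$ with $m \le a+n$, let $\lambda_n = (m, a+n-m)$ and $\mu_n = (1,1,\ldots,1,n)$ (with $a$ ones) be compositions of $a+n$, and let $\mathscr{D}_{\mu_n,\lambda_n}$ denote the set of minimal-length representatives of the double cosets $\mathfrak{S}_{\mu_n} \backslash \mathfrak{S}_{a+n} / \mathfrak{S}_{\lambda_n}$. Then $\mathscr{D}_{\mu_n,\lambda_n} \subseteq \mathscr{D}_{\mu_{n+1},\lambda_{n+1}}$ under the standard inclusion $\mathfrak{S}_{a+n} \hookrightarrow \mathfrak{S}_{a+n+1}$. -/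
noncomputable section

variable (k : Type) [Field k] (q : k)

/-- The adjacent transposition `s_i = (i, i+1)` (0-indexed) in the symmetric group `S_n`. -/
def sgen {n : ℕ} (i : Fin (n - 1)) : Equiv.Perm (Fin n) :=
  Equiv.swap ⟨i.1, by have := i.2; omega⟩ ⟨i.1 + 1, by have := i.2; omega⟩

/-- Product of a word in the generators. -/
def wprod {n : ℕ} (w : List (Fin (n - 1))) : Equiv.Perm (Fin n) := (w.map sgen).prod

/-- Coxeter length of a permutation: minimal length of an expression in adjacent
transpositions. -/
def plen {n : ℕ} (σ : Equiv.Perm (Fin n)) : ℕ :=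
  sInf {l | ∃ w : List (Fin (n - 1)), wprod w = σ ∧ w.length = l}

/-- A word is reduced if its length equals the Coxeter length of its product. -/
def IsRedWord {n : ℕ} (w : List (Fin (n - 1))) : Prop := w.length = plen (wprod w)

/-- The defining relations of the Iwahori–Hecke algebra of `S_n`. -/
inductive HRel (n : ℕ) : FreeAlgebra k (Fin (n - 1)) → FreeAlgebra k (Fin (n - 1)) → Prop
  | quad (i : Fin (n - 1)) :
      HRel n ((FreeAlgebra.ι k i - algebraMap k _ q) * (FreeAlgebra.ι k i + 1)) 0
  | comm (i j : Fin (n - 1)) (h : i.1 + 1 < j.1) :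
      HRel n (FreeAlgebra.ι k i * FreeAlgebra.ι k j) (FreeAlgebra.ι k j * FreeAlgebra.ι k i)
  | braid (i j : Fin (n - 1)) (h : j.1 = i.1 + 1) :
      HRel n (FreeAlgebra.ι k i * FreeAlgebra.ι k j * FreeAlgebra.ι k i)
        (FreeAlgebra.ι k j * FreeAlgebra.ι k i * FreeAlgebra.ι k j)

/-- The Iwahori–Hecke algebra `H_n` of the symmetric group `S_n` over `k` with parameter `q`. -/
abbrev Hecke (n : ℕ) : Type := RingQuot (HRel k q n)

/-- The generator `T_{s_i}` of the Hecke algebra. -/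
def Tg {n : ℕ} (i : Fin (n - 1)) : Hecke k q n :=
  RingQuot.mkAlgHom k (HRel k q n) (FreeAlgebra.ι k i)

/-- `T_w` for a word `w` in the generators. -/
def Tw {n : ℕ} (w : List (Fin (n - 1))) : Hecke k q n := (w.map (Tg k q)).prod

open scoped Classical in
/-- The basis element `T_σ`, defined via a (choice of) reduced expression for `σ`. -/
def Tp {n : ℕ} (σ : Equiv.Perm (Fin n)) : Hecke k q n :=
  if h : ∃ w, IsRedWord w ∧ wprod w = σ then Tw k q h.choose else 1

/-- For a composition `c` of `n`, the block index of a point `x`. -/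
def blockIdx (c : List ℕ) (x : ℕ) : ℕ := sInf {j | x < (c.take (j + 1)).sum}

/-- The Young subgroup of `S_n` associated with a composition `c`: permutations
preserving each consecutive block. -/
def young {n : ℕ} (c : List ℕ) : Subgroup (Equiv.Perm (Fin n)) where
  carrier := {σ | ∀ x : Fin n, blockIdx c (σ x).1 = blockIdx c x.1}
  one_mem' := by intro x; rfl
  mul_mem' := by
    intro a b ha hb x
    have h1 := ha (b x)
    have h2 := hb x
    simpa [Equiv.Perm.mul_apply] using h1.trans h2
  inv_mem' := by
    intro a ha x
    have := ha (a⁻¹ x)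
    simpa using this.symm

/-- The subgroup `S_{{s,…,t}}` (1-indexed) of permutations fixing every point outside
`{s,…,t}`. -/
def SIntv {N : ℕ} (s t : ℕ) : Subgroup (Equiv.Perm (Fin N)) where
  carrier := {σ | ∀ x : Fin N, x.1 + 1 < s ∨ t < x.1 + 1 → σ x = x}
  one_mem' := by intro x _; rfl
  mul_mem' := by
    intro a b ha hb x hx
    have h2 := hb x hx
    have h1 := ha x hx
    simp [Equiv.Perm.mul_apply, h2, h1]
  inv_mem' := by
    intro a ha x hx
    have h1 := ha x hx
    have : a⁻¹ (a x) = a⁻¹ x := by rw [h1]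
    simpa using this.symm

/-- Minimal-length double coset representatives for `A \ S_n / B`. -/
def minRep {n : ℕ} (A B : Subgroup (Equiv.Perm (Fin n))) : Set (Equiv.Perm (Fin n)) :=
  {σ | ∀ β ∈ A, ∀ γ ∈ B, plen σ ≤ plen (β * σ * γ)}

/-- The standard inclusion `S_N ↪ S_{N+1}` fixing the last point. -/
def pincl {N : ℕ} (σ : Equiv.Perm (Fin N)) : Equiv.Perm (Fin (N + 1)) :=
  σ.viaEmbedding (Fin.castSuccEmb)

end


namespace MinRepAux

/-- The inversion set of a permutation of `Fin n`. -/
def invF {n : ℕ} (σ : Equiv.Perm (Fin n)) : Finset (Fin n × Fin n) :=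
  Finset.univ.filter fun p => p.1 < p.2 ∧ σ p.2 < σ p.1

/-- The number of inversions. -/
def invC {n : ℕ} (σ : Equiv.Perm (Fin n)) : ℕ := (invF σ).card

lemma invC_def {n : ℕ} (σ : Equiv.Perm (Fin n)) : invC σ = (invF σ).card := rfl

lemma mem_invF {n : ℕ} {σ : Equiv.Perm (Fin n)} {p : Fin n × Fin n} :
    p ∈ invF σ ↔ p.1 < p.2 ∧ σ p.2 < σ p.1 := by
  simp [invF]

lemma invC_inv {n : ℕ} (σ : Equiv.Perm (Fin n)) : invC σ⁻¹ = invC σ := by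
  unfold invC
  apply Finset.card_bij' (fun p _ => (σ⁻¹ p.2, σ⁻¹ p.1)) (fun p _ => (σ p.2, σ p.1))
  · intro p hp; rw [mem_invF] at hp ⊢
    simpa using ⟨hp.2, hp.1⟩
  · intro p hp; rw [mem_invF] at hp ⊢
    simpa using ⟨hp.2, hp.1⟩
  · intro p hp; simp
  · intro p hp; simp

lemma swap_adj_lt {n : ℕ} (i : Fin (n-1)) {x y : Fin n} (hxy : x < y)
    (hne : ¬(x.1 = i.1 ∧ y.1 = i.1 + 1)) :
    sgen i x < sgen i y := by
  have hi := i.2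
  rw [show sgen i = Equiv.swap ⟨i.1, by omega⟩ ⟨i.1+1, by omega⟩ from rfl]
  rw [Equiv.swap_apply_def, Equiv.swap_apply_def]
  rw [Fin.lt_def] at hxy ⊢
  split_ifs <;> simp only [Fin.ext_iff, Fin.lt_def] at * <;> omega

lemma sgen_sgen {n : ℕ} (i : Fin (n-1)) (x : Fin n) : sgen i (sgen i x) = x :=
  Equiv.swap_apply_self _ _ _

lemma sgen_inv {n : ℕ} (i : Fin (n-1)) : (sgen i)⁻¹ = sgen i := Equiv.swap_inv _ _

lemma invC_mul_sgen_le {n : ℕ} (σ : Equiv.Perm (Fin n)) (i : Fin (n-1)) :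
    invC (σ * sgen i) ≤ invC σ + 1 := by
  have hi := i.2
  set p : Fin n := ⟨i.1, by omega⟩ with hp
  set q : Fin n := ⟨i.1+1, by omega⟩ with hq
  have hcard : ((invF (σ * sgen i)).erase (p,q)).card ≤ (invF σ).card := by
    apply Finset.card_le_card_of_injOn (fun z => (sgen i z.1, sgen i z.2))
    · intro z hz
      rw [Finset.mem_coe] at hz ⊢
      rw [Finset.mem_erase] at hz
      obtain ⟨hzne, hz⟩ := hz
      rw [mem_invF] at hz ⊢
      refine ⟨swap_adj_lt i hz.1 ?_, ?_⟩
      · rintro ⟨h1, h2⟩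
        exact hzne (Prod.ext (Fin.ext h1) (Fin.ext h2))
      · simpa [Equiv.Perm.mul_apply] using hz.2
    · intro z1 _ z2 _ he
      rw [Prod.ext_iff] at he
      exact Prod.ext ((sgen i).injective he.1) ((sgen i).injective he.2)
  by_cases hmem : (p,q) ∈ invF (σ * sgen i)
  · rw [Finset.card_erase_of_mem hmem] at hcard
    have := Finset.card_pos.mpr ⟨_, hmem⟩
    unfold invC; omega
  · rw [Finset.erase_eq_of_notMem hmem] at hcard
    unfold invC; omega

lemma invC_mul_sgen_lt {n : ℕ} (σ : Equiv.Perm (Fin n)) (i : Fin (n-1))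
    {h1 : i.1 < n} {h2 : i.1 + 1 < n}
    (hd : σ ⟨i.1 + 1, h2⟩ < σ ⟨i.1, h1⟩) : invC (σ * sgen i) < invC σ := by
  set p : Fin n := ⟨i.1, h1⟩ with hp
  set q : Fin n := ⟨i.1+1, h2⟩ with hq
  have hpq : p < q := by rw [hp, hq]; exact Fin.mk_lt_mk.mpr (Nat.lt_succ_self _)
  have hsp : sgen i p = q := Equiv.swap_apply_left _ _
  have hsq : sgen i q = p := Equiv.swap_apply_right _ _
  have hpq_mem : (p,q) ∈ invF σ := mem_invF.mpr ⟨hpq, hd⟩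
  have hpq_not : (p,q) ∉ invF (σ * sgen i) := by
    rw [mem_invF]
    rintro ⟨-, hv⟩
    rw [Equiv.Perm.mul_apply, Equiv.Perm.mul_apply, hsp, hsq] at hv
    exact absurd hv (lt_asymm hd)
  have hcard : (invF (σ * sgen i)).card ≤ ((invF σ).erase (p,q)).card := by
    apply Finset.card_le_card_of_injOn (fun z => (sgen i z.1, sgen i z.2))
    · intro z hz
      rw [Finset.mem_coe] at hz ⊢
      have hzne : z ≠ (p, q) := by rintro rfl; exact hpq_not hz
      rw [mem_invF] at hz
      rw [Finset.mem_erase]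
      constructor
      · intro h
        rw [Prod.ext_iff] at h
        have e1 : z.1 = q := by
          have := congrArg (sgen i) h.1; rwa [sgen_sgen, hsp] at this
        have e2 : z.2 = p := by
          have := congrArg (sgen i) h.2; rwa [sgen_sgen, hsq] at this
        have := hz.1
        rw [e1, e2] at this
        exact absurd this (lt_asymm hpq)
      · rw [mem_invF]
        refine ⟨swap_adj_lt i hz.1 ?_, by simpa [Equiv.Perm.mul_apply] using hz.2⟩
        rintro ⟨ha, hb⟩
        exact hzne (Prod.ext (Fin.ext ha) (Fin.ext hb))
    · intro z1 _ z2 _ he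
      rw [Prod.ext_iff] at he
      exact Prod.ext ((sgen i).injective he.1) ((sgen i).injective he.2)
  rw [Finset.card_erase_of_mem hpq_mem] at hcard
  have := Finset.card_pos.mpr ⟨_, hpq_mem⟩
  unfold invC; omega

lemma invC_sgen_mul_le {n : ℕ} (σ : Equiv.Perm (Fin n)) (i : Fin (n-1)) :
    invC (sgen i * σ) ≤ invC σ + 1 := by
  have h : (sgen i * σ)⁻¹ = σ⁻¹ * sgen i := by rw [mul_inv_rev, sgen_inv]
  calc invC (sgen i * σ) = invC (σ⁻¹ * sgen i) := by rw [← h, invC_inv]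
    _ ≤ invC σ⁻¹ + 1 := invC_mul_sgen_le _ _
    _ = invC σ + 1 := by rw [invC_inv]

lemma invC_eq_zero_iff {n : ℕ} (σ : Equiv.Perm (Fin n)) :
    invC σ = 0 ↔ ∀ x y : Fin n, x < y → σ x < σ y := by
  rw [invC_def, Finset.card_eq_zero]
  constructor
  · intro h x y hxy
    rcases lt_trichotomy (σ x) (σ y) with h'|h'|h'
    · exact h'
    · exact absurd (σ.injective h') (ne_of_lt hxy)
    · exfalso
      have : (x,y) ∈ invF σ := mem_invF.mpr ⟨hxy, h'⟩
      rw [h] at this; exact absurd this (Finset.notMem_empty _)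
  · intro h
    ext z
    simp only [Finset.notMem_empty, iff_false, mem_invF, not_and]
    intro h1
    exact lt_asymm (h _ _ h1)

lemma mono_of_adj {N : ℕ} (w : Equiv.Perm (Fin N)) (s t : ℕ)
    (h : ∀ (j : ℕ) (hj : j + 1 < N), s ≤ j → j + 1 < t → w ⟨j, by omega⟩ < w ⟨j+1, hj⟩) :
    ∀ x y : Fin N, s ≤ x.1 → y.1 < t → x < y → w x < w y := by
  have key : ∀ (d : ℕ) (x y : Fin N), s ≤ x.1 → y.1 < t → y.1 = x.1 + d + 1 → w x < w y := by
    intro d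
    induction d with
    | zero =>
      intro x y hx hy hxy
      have hj : x.1 + 1 < N := by have := y.2; omega
      have hh := h x.1 hj hx (by omega)
      have e1 : (⟨x.1, by omega⟩ : Fin N) = x := rfl
      have e2 : (⟨x.1 + 1, hj⟩ : Fin N) = y := Fin.ext (show x.1 + 1 = y.1 by omega)
      rwa [e1, e2] at hh
    | succ d ihd =>
      intro x y hx hy hxy
      have hmid : x.1 + d + 1 < N := by have := y.2; omega
      have h1 := ihd x ⟨x.1 + d + 1, hmid⟩ hx (show x.1 + d + 1 < t by omega) rfl
      have h2 := h (x.1 + d + 1) (by have := y.2; omega) (by omega) (by omega)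
      have e2 : (⟨x.1 + d + 1 + 1, by have := y.2; omega⟩ : Fin N) = y :=
        Fin.ext (show x.1 + d + 1 + 1 = y.1 by omega)
      rw [e2] at h2
      exact h1.trans h2
  intro x y hx hy hxy
  exact key (y.1 - x.1 - 1) x y hx hy (by have := Fin.lt_def.mp hxy; omega)

lemma exists_word {n : ℕ} : ∀ (K : ℕ) (σ : Equiv.Perm (Fin n)), invC σ ≤ K →
    ∃ w : List (Fin (n-1)), wprod w = σ ∧ w.length ≤ invC σ := by
  intro K
  induction K with
  | zero =>
    intro σ h
    have hmono := (invC_eq_zero_iff σ).mp (by omega)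
    have hσ1 : σ = 1 := by
      have hsm : StrictMono σ := fun x y hxy => hmono x y hxy
      have := (StrictMono.range_inj hsm strictMono_id).mp
        (by rw [Equiv.range_eq_univ, Set.range_id])
      exact Equiv.ext fun x => congrFun this x
    exact ⟨[], by simp [wprod, hσ1], by simp⟩
  | succ K ih =>
    intro σ h
    by_cases h0 : invC σ ≤ K
    · exact ih σ h0
    have hdesc : ∃ (j : ℕ) (hj : j + 1 < n), σ ⟨j+1, hj⟩ < σ ⟨j, by omega⟩ := by
      by_contra hno
      push_neg at hno
      have hasc : ∀ (j : ℕ) (hj : j + 1 < n), (0:ℕ) ≤ j → j + 1 < n →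
          σ ⟨j, by omega⟩ < σ ⟨j+1, hj⟩ := by
        intro j hj _ _
        refine lt_of_le_of_ne (hno j hj) (fun he => ?_)
        have := σ.injective he
        simp [Fin.ext_iff] at this
      have hmono := mono_of_adj σ 0 n hasc
      have : invC σ = 0 := (invC_eq_zero_iff σ).mpr
        (fun x y hxy => hmono x y (Nat.zero_le _) y.2 hxy)
      omega
    obtain ⟨j, hj, hd⟩ := hdesc
    have hjn : j < n - 1 := by omega
    set i : Fin (n - 1) := ⟨j, hjn⟩ with hidef
    have hlt := invC_mul_sgen_lt σ i (h1 := by omega) (h2 := hj) hd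
    obtain ⟨w, hw, hwl⟩ := ih (σ * sgen i) (by omega)
    refine ⟨w ++ [i], ?_, ?_⟩
    · show ((w ++ [i]).map sgen).prod = σ
      rw [List.map_append, List.prod_append]
      have : wprod w = σ * sgen i := hw
      show (w.map sgen).prod * ([i].map sgen).prod = σ
      rw [show (w.map sgen).prod = wprod w from rfl, this]
      simp [mul_assoc, Equiv.swap_mul_self, sgen]
    · rw [List.length_append]
      simp only [List.length_singleton]
      omega

lemma invC_wprod_le {n : ℕ} (w : List (Fin (n-1))) : invC (wprod w) ≤ w.length := by
  induction w with
  | nil =>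
    have : invC (wprod ([] : List (Fin (n-1)))) = 0 := by
      apply (invC_eq_zero_iff _).mpr
      intro x y hxy
      simpa [wprod] using hxy
    omega
  | cons i w ih =>
    have he : wprod (i :: w) = sgen i * wprod w := by simp [wprod]
    rw [he]
    calc invC (sgen i * wprod w) ≤ invC (wprod w) + 1 := invC_sgen_mul_le _ _
      _ ≤ w.length + 1 := by omega
      _ = (i :: w).length := by simp

lemma plen_eq_invC {n : ℕ} (σ : Equiv.Perm (Fin n)) : plen σ = invC σ := by
  obtain ⟨w, hw, hl⟩ := exists_word (invC σ) σ le_rfl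
  unfold plen
  have hmem : w.length ∈ {l | ∃ w : List (Fin (n-1)), wprod w = σ ∧ w.length = l} :=
    ⟨w, hw, rfl⟩
  have h1 : sInf {l | ∃ w : List (Fin (n-1)), wprod w = σ ∧ w.length = l} ≤ invC σ :=
    le_trans (Nat.sInf_le hmem) hl
  obtain ⟨w', hw', hl'⟩ := Nat.sInf_mem ⟨w.length, hmem⟩
  have h2 := invC_wprod_le w'
  rw [hw'] at h2
  omega

lemma mem_young_iff {N : ℕ} {c : List ℕ} {σ : Equiv.Perm (Fin N)} :
    σ ∈ young c ↔ ∀ x : Fin N, blockIdx c (σ x).1 = blockIdx c x.1 := Iff.rfl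

lemma blockIdx_pair {m M x : ℕ} (hx : x < m + M) :
    blockIdx [m, M] x = if x < m then 0 else 1 := by
  unfold blockIdx
  split_ifs with h
  · apply Nat.sInf_eq_zero.mpr
    left
    show x < ([m, M].take 1).sum
    simpa using h
  · have h1 : (1:ℕ) ∈ {j | x < ([m, M].take (j + 1)).sum} := by
      show x < ([m, M].take 2).sum
      simpa using hx
    apply le_antisymm
    · exact Nat.sInf_le h1
    · by_contra hc
      push_neg at hc
      have h0 : sInf {j | x < ([m, M].take (j + 1)).sum} = 0 := by omega
      rcases Nat.sInf_eq_zero.mp h0 with h0' | h0'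
      · have : x < ([m, M].take 1).sum := h0'
        simp at this
        omega
      · rw [h0'] at h1
        exact absurd h1 (Set.notMem_empty _)

lemma sum_take_rep (a M j : ℕ) :
    ((List.replicate a 1 ++ [M]).take (j+1)).sum = if j + 1 ≤ a then j + 1 else a + M := by
  rw [List.take_append, List.sum_append, List.take_replicate,
    List.sum_replicate, smul_eq_mul, mul_one, List.length_replicate]
  split_ifs with h
  · have h2 : j + 1 - a = 0 := by omega
    rw [h2]
    simp
    omega
  · obtain ⟨k, hk⟩ : ∃ k, j + 1 - a = k + 1 := ⟨j - a, by omega⟩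
    rw [hk]
    simp
    omega

lemma blockIdx_rep {a M x : ℕ} (hx : x < a + M) :
    blockIdx (List.replicate a 1 ++ [M]) x = min x a := by
  unfold blockIdx
  have hmem : min x a ∈ {j | x < ((List.replicate a 1 ++ [M]).take (j + 1)).sum} := by
    show x < _
    rw [sum_take_rep]
    split_ifs <;> omega
  apply le_antisymm
  · exact Nat.sInf_le hmem
  · by_contra hc
    push_neg at hc
    have hlow := Nat.sInf_mem (⟨min x a, hmem⟩ :
      Set.Nonempty {j | x < ((List.replicate a 1 ++ [M]).take (j + 1)).sum})
    rw [Set.mem_setOf_eq, sum_take_rep] at hlow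
    split_ifs at hlow <;> omega

lemma young_pair {N m M : ℕ} (hN : m + M = N) {γ : Equiv.Perm (Fin N)}
    (hγ : γ ∈ young [m, M]) (x : Fin N) : (γ x).1 < m ↔ x.1 < m := by
  have h := mem_young_iff.mp hγ x
  rw [blockIdx_pair (by have := (γ x).2; omega), blockIdx_pair (by have := x.2; omega)] at h
  split_ifs at h <;> omega

lemma young_rep_fix {N a M : ℕ} (hN : a + M = N) {β : Equiv.Perm (Fin N)}
    (hβ : β ∈ young (List.replicate a 1 ++ [M])) (x : Fin N) :
    (x.1 < a → β x = x) ∧ (a ≤ x.1 → a ≤ (β x).1) := by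
  have h := mem_young_iff.mp hβ x
  rw [blockIdx_rep (by have := (β x).2; omega), blockIdx_rep (by have := x.2; omega)] at h
  constructor
  · intro hx
    exact Fin.ext (by omega)
  · intro hx
    omega

lemma sgen_mem_young {N : ℕ} (c : List ℕ) (i : Fin (N-1))
    (h : blockIdx c i.1 = blockIdx c (i.1+1)) : sgen i ∈ young c := by
  have hi := i.2
  rw [mem_young_iff]
  intro x
  rcases eq_or_ne x ⟨i.1, by omega⟩ with rfl | hx1
  · rw [show sgen i ⟨i.1, by omega⟩ = ⟨i.1+1, by omega⟩ from Equiv.swap_apply_left _ _]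
    exact h.symm
  rcases eq_or_ne x ⟨i.1+1, by omega⟩ with he | hx2
  · rw [he, show sgen i ⟨i.1+1, by omega⟩ = ⟨i.1, by omega⟩ from Equiv.swap_apply_right _ _]
    exact h
  · rw [show sgen i x = x from Equiv.swap_apply_of_ne_of_ne hx1 hx2]

end MinRepAux

/-- With `λ_n = (m, a+n-m)` and `μ_n = (1^a, n)`, the set of
minimal-length double coset representatives satisfies `𝒟_{μ_n,λ_n} ⊆ 𝒟_{μ_{n+1},λ_{n+1}}`
under the standard inclusion `S_{a+n} ↪ S_{a+n+1}`. -/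
theorem minRep_mono (a m n : ℕ) (hm : m ≤ a + n) (σ : Equiv.Perm (Fin (a + n)))
    (hσ : σ ∈ minRep (young (List.replicate a 1 ++ [n])) (young [m, a + n - m])) :
    pincl σ ∈ minRep (n := a + n + 1)
      (young (List.replicate a 1 ++ [n + 1])) (young [m, a + n + 1 - m]) := by
  -- right ascents of σ within the blocks of `[m, a+n-m]`
  have ascR : ∀ (j : ℕ) (hj : j + 1 < a + n), (j + 1 < m ∨ m ≤ j) →
      σ ⟨j, by omega⟩ < σ ⟨j + 1, hj⟩ := by
    intro j hj hcond
    have hjn : j < a + n - 1 := by omega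
    have hmem : sgen (⟨j, hjn⟩ : Fin (a + n - 1)) ∈ young [m, a + n - m] :=
      MinRepAux.sgen_mem_young _ _ (show blockIdx [m, a + n - m] j
          = blockIdx [m, a + n - m] (j + 1) by
        rw [MinRepAux.blockIdx_pair (by omega), MinRepAux.blockIdx_pair (by omega)]
        split_ifs <;> omega)
    have hle := hσ 1 (one_mem _) (sgen ⟨j, hjn⟩) hmem
    rw [one_mul, MinRepAux.plen_eq_invC, MinRepAux.plen_eq_invC] at hle
    by_contra hlt
    push_neg at hlt
    have hd : σ ⟨j + 1, hj⟩ < σ ⟨j, by omega⟩ := by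
      refine lt_of_le_of_ne hlt (fun he => ?_)
      have := σ.injective he
      simp [Fin.ext_iff] at this
    have := MinRepAux.invC_mul_sgen_lt σ ⟨j, hjn⟩ (h1 := by omega) (h2 := hj) hd
    omega
  -- left ascents: σ⁻¹ within the big block of `(1^a, n)`
  have ascL : ∀ (j : ℕ) (hj : j + 1 < a + n), a ≤ j →
      σ⁻¹ ⟨j, by omega⟩ < σ⁻¹ ⟨j + 1, hj⟩ := by
    intro j hj haj
    have hjn : j < a + n - 1 := by omega
    have hmem : sgen (⟨j, hjn⟩ : Fin (a + n - 1)) ∈ young (List.replicate a 1 ++ [n]) :=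
      MinRepAux.sgen_mem_young _ _ (show blockIdx (List.replicate a 1 ++ [n]) j
          = blockIdx (List.replicate a 1 ++ [n]) (j + 1) by
        rw [MinRepAux.blockIdx_rep (by omega), MinRepAux.blockIdx_rep (by omega)]
        omega)
    have hle := hσ (sgen ⟨j, hjn⟩) hmem 1 (one_mem _)
    rw [mul_one, MinRepAux.plen_eq_invC, MinRepAux.plen_eq_invC] at hle
    by_contra hlt
    push_neg at hlt
    have hd : σ⁻¹ ⟨j + 1, hj⟩ < σ⁻¹ ⟨j, by omega⟩ := by
      refine lt_of_le_of_ne hlt (fun he => ?_)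
      have := σ⁻¹.injective he
      simp [Fin.ext_iff] at this
    have hlt2 := MinRepAux.invC_mul_sgen_lt σ⁻¹ ⟨j, hjn⟩ (h1 := by omega) (h2 := hj) hd
    have he2 : MinRepAux.invC (σ⁻¹ * sgen ⟨j, hjn⟩)
        = MinRepAux.invC (sgen ⟨j, hjn⟩ * σ) := by
      rw [← MinRepAux.invC_inv (sgen ⟨j, hjn⟩ * σ), mul_inv_rev, MinRepAux.sgen_inv]
    rw [he2, MinRepAux.invC_inv] at hlt2
    omega
  -- pointwise description of `pincl σ`
  have wapp : ∀ (x : ℕ) (hx : x < a + n), pincl σ ⟨x, by omega⟩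
      = ⟨(σ ⟨x, hx⟩).1, by have := (σ ⟨x, hx⟩).2; omega⟩ := by
    intro x hx
    have h2 : (⟨x, by omega⟩ : Fin (a + n + 1)) = Fin.castSuccEmb ⟨x, hx⟩ := rfl
    rw [show pincl σ = σ.viaEmbedding Fin.castSuccEmb from rfl, h2,
      Equiv.Perm.viaEmbedding_apply]
    rfl
  have wlast : pincl σ ⟨a + n, by omega⟩ = ⟨a + n, by omega⟩ := by
    rw [show pincl σ = σ.viaEmbedding Fin.castSuccEmb from rfl]
    apply Equiv.Perm.viaEmbedding_apply_of_notMem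
    rintro ⟨y, hy⟩
    have h1 : (Fin.castSuccEmb y).1 = a + n := congrArg Fin.val hy
    have h2 : (Fin.castSuccEmb y).1 = y.1 := rfl
    have := y.2
    omega
  have winvapp : ∀ (v : ℕ) (hv : v < a + n), (pincl σ)⁻¹ ⟨v, by omega⟩
      = ⟨(σ⁻¹ ⟨v, hv⟩).1, by have := (σ⁻¹ ⟨v, hv⟩).2; omega⟩ := by
    intro v hv
    rw [Equiv.Perm.inv_eq_iff_eq]
    rw [wapp ((σ⁻¹ ⟨v, hv⟩).1) ((σ⁻¹ ⟨v, hv⟩).2)]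
    apply Fin.ext
    show v = (σ ⟨(σ⁻¹ ⟨v, hv⟩).1, (σ⁻¹ ⟨v, hv⟩).2⟩).1
    have e : (⟨(σ⁻¹ ⟨v, hv⟩).1, (σ⁻¹ ⟨v, hv⟩).2⟩ : Fin (a + n)) = σ⁻¹ ⟨v, hv⟩ := rfl
    rw [e, show σ (σ⁻¹ ⟨v, hv⟩) = ⟨v, hv⟩ from σ.apply_symm_apply _]
  have winvlast : (pincl σ)⁻¹ ⟨a + n, by omega⟩ = ⟨a + n, by omega⟩ := by
    rw [Equiv.Perm.inv_eq_iff_eq]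
    exact wlast.symm
  -- monotonicity of pincl σ on the λ-blocks
  have wblk1 := MinRepAux.mono_of_adj (pincl σ) 0 m (by
    intro j hj h0 hjm
    have hja : j + 1 < a + n := by omega
    have hj' : j < a + n := by omega
    have e1 := wapp j hj'
    have e2 := wapp (j+1) hja
    rw [e1, e2]
    exact Fin.mk_lt_mk.mpr (Fin.lt_def.mp (ascR j hja (Or.inl hjm))))
  have wblk2 := MinRepAux.mono_of_adj (pincl σ) m (a + n + 1) (by
    intro j hj hm2 _
    by_cases hcase : j + 1 < a + n
    · have hj' : j < a + n := by omega
      have e1 := wapp j hj'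
      have e2 := wapp (j+1) hcase
      rw [e1, e2]
      exact Fin.mk_lt_mk.mpr (Fin.lt_def.mp (ascR j hcase (Or.inr hm2)))
    · have hje : j + 1 = a + n := by omega
      have hj' : j < a + n := by omega
      have e : (⟨j + 1, hj⟩ : Fin (a + n + 1)) = ⟨a + n, by omega⟩ := Fin.ext hje
      have e1 := wapp j hj'
      rw [e, wlast, e1]
      exact Fin.mk_lt_mk.mpr ((σ ⟨j, hj'⟩).2))
  -- monotonicity of (pincl σ)⁻¹ on the big μ-block
  have winv := MinRepAux.mono_of_adj (pincl σ)⁻¹ a (a + n + 1) (by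
    intro j hj haj _
    by_cases hcase : j + 1 < a + n
    · have hj' : j < a + n := by omega
      have e1 := winvapp j hj'
      have e2 := winvapp (j+1) hcase
      rw [e1, e2]
      exact Fin.mk_lt_mk.mpr (Fin.lt_def.mp (ascL j hcase haj))
    · have hje : j + 1 = a + n := by omega
      have hj' : j < a + n := by omega
      have e : (⟨j + 1, hj⟩ : Fin (a + n + 1)) = ⟨a + n, by omega⟩ := Fin.ext hje
      have e1 := winvapp j hj'
      rw [e, winvlast, e1]
      exact Fin.mk_lt_mk.mpr ((σ⁻¹ ⟨j, hj'⟩).2))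
  -- structure of the inversions of pincl σ
  have hstruct : ∀ z ∈ MinRepAux.invF (pincl σ),
      z.1.1 < m ∧ m ≤ z.2.1 ∧ ((pincl σ) z.2).1 < a := by
    intro z hz
    rw [MinRepAux.mem_invF] at hz
    obtain ⟨hlt, hv⟩ := hz
    have hx : z.1.1 < m := by
      by_contra hc
      push_neg at hc
      exact absurd (wblk2 z.1 z.2 hc (by have := z.2.2; omega) hlt) (lt_asymm hv)
    have hy : m ≤ z.2.1 := by
      by_contra hc
      push_neg at hc
      exact absurd (wblk1 z.1 z.2 (Nat.zero_le _) hc hlt) (lt_asymm hv)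
    have hwy : ((pincl σ) z.2).1 < a := by
      by_contra hc
      push_neg at hc
      have h2 := winv ((pincl σ) z.2) ((pincl σ) z.1) hc (((pincl σ) z.1).2) hv
      rw [show (pincl σ)⁻¹ ((pincl σ) z.2) = z.2 from (pincl σ).symm_apply_apply _,
        show (pincl σ)⁻¹ ((pincl σ) z.1) = z.1 from (pincl σ).symm_apply_apply _] at h2
      exact absurd h2 (lt_asymm hlt)
    exact ⟨hx, hy, hwy⟩
  -- the final inequality
  intro β hβ γ hγ
  rw [MinRepAux.plen_eq_invC, MinRepAux.plen_eq_invC, MinRepAux.invC_def, MinRepAux.invC_def]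
  apply Finset.card_le_card_of_injOn (fun z => (γ⁻¹ z.1, γ⁻¹ z.2))
  · intro z hz
    rw [Finset.mem_coe] at hz ⊢
    obtain ⟨hx, hy, hwy⟩ := hstruct z hz
    rw [MinRepAux.mem_invF] at hz ⊢
    have hγ1 : (γ⁻¹ z.1).1 < m := by
      have h := MinRepAux.young_pair (show m + (a + n + 1 - m) = a + n + 1 by omega)
        hγ (γ⁻¹ z.1)
      rw [show γ (γ⁻¹ z.1) = z.1 from γ.apply_symm_apply _] at h
      exact h.mp hx
    have hγ2 : m ≤ (γ⁻¹ z.2).1 := by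
      have h := MinRepAux.young_pair (show m + (a + n + 1 - m) = a + n + 1 by omega)
        hγ (γ⁻¹ z.2)
      rw [show γ (γ⁻¹ z.2) = z.2 from γ.apply_symm_apply _] at h
      by_contra hc
      push_neg at hc
      have := h.mpr hc
      omega
    constructor
    · show γ⁻¹ z.1 < γ⁻¹ z.2
      rw [Fin.lt_def]
      omega
    · show (β * pincl σ * γ) (γ⁻¹ z.2) < (β * pincl σ * γ) (γ⁻¹ z.1)
      have e1 : (β * pincl σ * γ) (γ⁻¹ z.1) = β (pincl σ z.1) := by
        simp [Equiv.Perm.mul_apply]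
      have e2 : (β * pincl σ * γ) (γ⁻¹ z.2) = β (pincl σ z.2) := by
        simp [Equiv.Perm.mul_apply]
      rw [e1, e2]
      have hb := fun x => MinRepAux.young_rep_fix
        (show a + (n + 1) = a + n + 1 by omega) hβ x
      have f2 : β (pincl σ z.2) = pincl σ z.2 := (hb _).1 hwy
      by_cases hcase : (pincl σ z.1).1 < a
      · rw [f2, (hb _).1 hcase]
        exact hz.2
      · push_neg at hcase
        have h3 := (hb (pincl σ z.1)).2 hcase
        rw [f2, Fin.lt_def]
        omega
  · intro z1 _ z2 _ he
    rw [Prod.ext_iff] at he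
    exact Prod.ext (γ⁻¹.injective he.1) (γ⁻¹.injective he.2)
end

section
/- With notation as above ($\lambda_n = (m, a+n-m)$, $\mu_n = (1^a, n)$ compositions of $a+n$), if $n \geq m$ then the cardinality of $\mathscr{D}_{\mu_n,\lambda_n}$ is independent of $n$; i.e., $|\mathscr{D}_{\mu_n,\lambda_n}| = |\mathscr{D}_{\mu_{n+1},\lambda_{n+1}}|$ for all $n \geq m$. -/
namespace SP
open Equiv Finset

variable {N : ℕ}

def invs (σ : Equiv.Perm (Fin N)) : Finset (Fin N × Fin N) :=
  Finset.univ.filter fun p => p.1 < p.2 ∧ σ p.2 < σ p.1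

def nInv (σ : Equiv.Perm (Fin N)) : ℕ := (invs σ).card

lemma mem_invs {σ : Equiv.Perm (Fin N)} {p : Fin N × Fin N} :
    p ∈ invs σ ↔ p.1 < p.2 ∧ σ p.2 < σ p.1 := by simp [invs]

lemma nInv_one : nInv (1 : Equiv.Perm (Fin N)) = 0 := by
  simp only [nInv, Finset.card_eq_zero]
  ext p
  simp only [mem_invs, Finset.notMem_empty, iff_false, not_and, Perm.one_apply]
  intro h; exact not_lt.2 h.le

lemma nInv_inv (σ : Equiv.Perm (Fin N)) : nInv σ⁻¹ = nInv σ := by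
  unfold nInv
  apply Finset.card_bij (fun p _ => (σ⁻¹ p.2, σ⁻¹ p.1))
  · intro p hp
    rw [mem_invs] at hp ⊢
    constructor
    · exact hp.2
    · simpa using hp.1
  · intro p hp q hq h
    rw [Prod.mk.injEq] at h
    exact Prod.ext (σ⁻¹.injective h.2) (σ⁻¹.injective h.1)
  · intro q hq
    rw [mem_invs] at hq
    refine ⟨(σ q.2, σ q.1), ?_, ?_⟩
    · rw [mem_invs]
      constructor
      · exact hq.2
      · simpa using hq.1
    · simp

lemma swap_adj_lt {a b x y : Fin N} (hab : a.1 + 1 = b.1) (hxy : x < y)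
    (hne : ¬(x = a ∧ y = b)) : Equiv.swap a b x < Equiv.swap a b y := by
  have hne' : ¬(x.1 = a.1 ∧ y.1 = b.1) := by
    intro h; exact hne ⟨Fin.ext h.1, Fin.ext h.2⟩
  rw [Fin.lt_def] at hxy
  rw [Equiv.swap_apply_def, Equiv.swap_apply_def]
  have key : ∀ u v : Fin N, u = v ↔ u.1 = v.1 := fun u v => Fin.ext_iff
  split_ifs <;> rw [Fin.lt_def] <;> omega

end SP


namespace SP
open Equiv Finset
variable {N : ℕ}

lemma adj_mem_flip {σ : Equiv.Perm (Fin N)} {a b : Fin N} (hab : a.1 + 1 = b.1) :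
    ((a, b) ∈ invs (σ * Equiv.swap a b) ↔ (a, b) ∉ invs σ) := by
  have hab' : a < b := by rw [Fin.lt_def]; omega
  have hne : a ≠ b := hab'.ne
  simp only [mem_invs, Perm.mul_apply, Equiv.swap_apply_left, Equiv.swap_apply_right]
  constructor
  · rintro ⟨-, h⟩ ⟨-, h'⟩
    exact absurd (h.trans h') (lt_irrefl _)
  · intro h
    refine ⟨hab', ?_⟩
    rcases lt_trichotomy (σ a) (σ b) with h' | h' | h'
    · exact h'
    · exact absurd (σ.injective h') hne
    · exact absurd ⟨hab', h'⟩ h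

lemma card_erase_eq {σ : Equiv.Perm (Fin N)} {a b : Fin N} (hab : a.1 + 1 = b.1) :
    ((invs (σ * Equiv.swap a b)).erase (a, b)).card = ((invs σ).erase (a, b)).card := by
  have hab' : a < b := by rw [Fin.lt_def]; omega
  set s := Equiv.swap a b with hs
  have hss : ∀ x : Fin N, s (s x) = x := fun x => Equiv.swap_apply_self a b x
  apply Finset.card_bij (fun p _ => (s p.1, s p.2))
  · intro p hp
    rw [Finset.mem_erase, mem_invs] at hp
    obtain ⟨hpne, hplt, hpv⟩ := hp
    have hpab : ¬(p.1 = a ∧ p.2 = b) := by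
      intro h; exact hpne (Prod.ext h.1 h.2)
    rw [Finset.mem_erase, mem_invs]
    refine ⟨?_, swap_adj_lt hab hplt hpab, ?_⟩
    · intro h
      rw [Prod.mk.injEq] at h
      have h1 : p.1 = s a := by rw [← h.1, hss]
      have h2 : p.2 = s b := by rw [← h.2, hss]
      rw [Equiv.swap_apply_left] at h1
      rw [Equiv.swap_apply_right] at h2
      rw [h1, h2] at hplt
      exact absurd (hplt.trans hab') (lt_irrefl _)
    · simpa [Perm.mul_apply] using hpv
  · intro p hp q hq h
    rw [Prod.mk.injEq] at h
    exact Prod.ext (s.injective h.1) (s.injective h.2)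
  · intro q hq
    rw [Finset.mem_erase, mem_invs] at hq
    obtain ⟨hqne, hqlt, hqv⟩ := hq
    have hqab : ¬(q.1 = a ∧ q.2 = b) := by
      intro h; exact hqne (Prod.ext h.1 h.2)
    refine ⟨(s q.1, s q.2), ?_, by simp [hss]⟩
    rw [Finset.mem_erase, mem_invs]
    refine ⟨?_, swap_adj_lt hab hqlt hqab, ?_⟩
    · intro h
      rw [Prod.mk.injEq] at h
      have h1 : q.1 = s a := by rw [← h.1, hss]
      have h2 : q.2 = s b := by rw [← h.2, hss]
      rw [Equiv.swap_apply_left] at h1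
      rw [Equiv.swap_apply_right] at h2
      rw [h1, h2] at hqlt
      exact absurd (hqlt.trans hab') (lt_irrefl _)
    · simpa [Perm.mul_apply, hss] using hqv

lemma nInv_mul_swap_asc {σ : Equiv.Perm (Fin N)} {a b : Fin N} (hab : a.1 + 1 = b.1)
    (h : σ a < σ b) : nInv (σ * Equiv.swap a b) = nInv σ + 1 := by
  have hab' : a < b := by rw [Fin.lt_def]; omega
  have hnot : (a, b) ∉ invs σ := by
    rw [mem_invs]; rintro ⟨-, h'⟩; exact absurd (h.trans h') (lt_irrefl _)
  have hmem : (a, b) ∈ invs (σ * Equiv.swap a b) := (adj_mem_flip hab).2 hnot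
  have h1 := card_erase_eq (σ := σ) hab
  rw [Finset.erase_eq_of_notMem hnot] at h1
  unfold nInv
  rw [← Finset.card_erase_add_one hmem, h1]

lemma nInv_mul_swap_desc {σ : Equiv.Perm (Fin N)} {a b : Fin N} (hab : a.1 + 1 = b.1)
    (h : σ b < σ a) : nInv σ = nInv (σ * Equiv.swap a b) + 1 := by
  have hab' : a < b := by rw [Fin.lt_def]; omega
  have hmem : (a, b) ∈ invs σ := by rw [mem_invs]; exact ⟨hab', h⟩
  have hnot : (a, b) ∉ invs (σ * Equiv.swap a b) := by
    intro hc; exact absurd hmem ((adj_mem_flip hab).1 hc)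
  have h1 := card_erase_eq (σ := σ) hab
  rw [Finset.erase_eq_of_notMem hnot] at h1
  unfold nInv
  rw [← Finset.card_erase_add_one hmem, h1]

end SP

namespace SP
open Equiv Finset
variable {N : ℕ}

lemma sgen_eq (i : Fin (N - 1)) :
    sgen i = Equiv.swap (⟨i.1, by have := i.2; omega⟩ : Fin N) ⟨i.1 + 1, by have := i.2; omega⟩ :=
  rfl

lemma nInv_swap_mul_le {σ : Equiv.Perm (Fin N)} {a b : Fin N} (hab : a.1 + 1 = b.1) :
    nInv (Equiv.swap a b * σ) ≤ nInv σ + 1 := by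
  have h1 : Equiv.swap a b * σ = (σ⁻¹ * Equiv.swap a b)⁻¹ := by
    rw [mul_inv_rev, inv_inv, Equiv.swap_inv]
  rw [h1, nInv_inv]
  rcases lt_trichotomy (σ⁻¹ a) (σ⁻¹ b) with h | h | h
  · rw [nInv_mul_swap_asc hab h, nInv_inv]
  · exact absurd (σ⁻¹.injective h) (by rw [Fin.ext_iff]; omega)
  · have := nInv_mul_swap_desc hab h
    rw [nInv_inv] at this
    omega

lemma nInv_wprod_le (w : List (Fin (N - 1))) : nInv (wprod w) ≤ w.length := by
  induction w with
  | nil => simp [wprod, nInv_one]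
  | cons i w ih =>
    have h : wprod (i :: w) = sgen i * wprod w := by simp [wprod]
    rw [h, sgen_eq i]
    calc nInv (Equiv.swap _ _ * wprod w) ≤ nInv (wprod w) + 1 := nInv_swap_mul_le rfl
      _ ≤ w.length + 1 := by omega
      _ = (i :: w).length := by simp

lemma no_descent_eq_one {σ : Equiv.Perm (Fin N)}
    (h : ∀ i : Fin (N - 1), σ ⟨i.1, by have := i.2; omega⟩ < σ ⟨i.1 + 1, by have := i.2; omega⟩) :
    σ = 1 := by
  match N, σ, h with
  | 0, σ, h => exact Equiv.ext (fun x => absurd x.2 (by omega))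
  | (M + 1), σ, h =>
    have hsm : StrictMono σ := by
      rw [Fin.strictMono_iff_lt_succ]
      intro i
      exact h i
    have hid : StrictMono (id : Fin (M+1) → Fin (M+1)) := strictMono_id
    have hr : Set.range σ = Set.range (id : Fin (M+1) → Fin (M+1)) := by
      simp [σ.surjective.range_eq]
    have := (hsm.range_inj hid).1 hr
    exact Equiv.ext (fun x => congrFun this x)

lemma exists_word_aux : ∀ k (σ : Equiv.Perm (Fin N)), nInv σ = k →
    ∃ w : List (Fin (N - 1)), wprod w = σ ∧ w.length = nInv σ := by
  intro k
  induction k using Nat.strong_induction_on with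
  | _ k ih =>
    intro σ hk
    by_cases hd : ∃ i : Fin (N - 1),
        σ ⟨i.1 + 1, by have := i.2; omega⟩ < σ ⟨i.1, by have := i.2; omega⟩
    · obtain ⟨i, hi⟩ := hd
      set a : Fin N := ⟨i.1, by have := i.2; omega⟩
      set b : Fin N := ⟨i.1 + 1, by have := i.2; omega⟩
      have hab : a.1 + 1 = b.1 := rfl
      have hdesc := nInv_mul_swap_desc hab hi
      have hlt : nInv (σ * Equiv.swap a b) < k := by omega
      obtain ⟨w, hw, hl⟩ := ih _ hlt (σ * Equiv.swap a b) rfl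
      refine ⟨w ++ [i], ?_, ?_⟩
      · simp only [wprod, List.map_append, List.prod_append, List.map_cons, List.map_nil,
          List.prod_cons, List.prod_nil, mul_one]
        rw [show (w.map sgen).prod = wprod w from rfl, hw, sgen_eq i]
        rw [mul_assoc]
        simp [Equiv.swap_mul_self]
        exact Equiv.swap_mul_self a b
      · simp only [List.length_append, List.length_cons, List.length_nil, hl]
        omega
    · push_neg at hd
      have h1 : σ = 1 := by
        apply no_descent_eq_one
        intro i
        rcases lt_trichotomy (σ ⟨i.1, by have := i.2; omega⟩)
            (σ ⟨i.1 + 1, by have := i.2; omega⟩) with h | h | h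
        · exact h
        · exact absurd (σ.injective h) (by simp [Fin.ext_iff])
        · exact absurd h (not_lt.2 (hd i))
      subst h1
      exact ⟨[], by simp [wprod], by simp [nInv_one]⟩

lemma exists_word (σ : Equiv.Perm (Fin N)) :
    ∃ w : List (Fin (N - 1)), wprod w = σ ∧ w.length = nInv σ :=
  exists_word_aux (nInv σ) σ rfl

lemma plen_eq_nInv (σ : Equiv.Perm (Fin N)) : plen σ = nInv σ := by
  obtain ⟨w, hw, hl⟩ := exists_word σ
  apply le_antisymm
  · exact Nat.sInf_le ⟨w, hw, hl⟩
  · have hne : {l | ∃ w : List (Fin (N - 1)), wprod w = σ ∧ w.length = l}.Nonempty :=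
      ⟨w.length, w, hw, rfl⟩
    obtain ⟨v, hv, hvl⟩ := Nat.sInf_mem hne
    calc nInv σ = nInv (wprod v) := by rw [hv]
      _ ≤ v.length := nInv_wprod_le v
      _ = plen σ := hvl

end SP


namespace SP
open Equiv Finset

lemma sum_take_mu (a n j : ℕ) :
    ((List.replicate a 1 ++ [n]).take j).sum = min j a + (if a < j then n else 0) := by
  rw [List.take_append, List.sum_append, List.take_replicate]
  simp only [List.sum_replicate, smul_eq_mul, mul_one, List.length_replicate]
  congr 1
  split_ifs with h
  · rw [List.take_of_length_le (by simp; omega)]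
    simp
  · rw [show j - a = 0 by omega]
    simp

lemma blockIdx_mu {a n x : ℕ} (hx : x < a + n) :
    blockIdx (List.replicate a 1 ++ [n]) x = min x a := by
  unfold blockIdx
  rcases lt_or_ge x a with h | h
  · rw [min_eq_left h.le]
    apply le_antisymm
    · apply Nat.sInf_le
      simp only [Set.mem_setOf_eq, sum_take_mu]
      split_ifs <;> omega
    · by_contra hc
      push_neg at hc
      obtain ⟨j, hj, hjx⟩ : ∃ j < x, x < ((List.replicate a 1 ++ [n]).take (j+1)).sum := by
        have hne : {j | x < ((List.replicate a 1 ++ [n]).take (j + 1)).sum}.Nonempty := by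
          refine ⟨x, ?_⟩
          simp only [Set.mem_setOf_eq, sum_take_mu]
          split_ifs <;> omega
        have := Nat.sInf_mem hne
        exact ⟨_, hc, this⟩
      rw [sum_take_mu] at hjx
      split_ifs at hjx <;> omega
  · rw [min_eq_right h]
    apply le_antisymm
    · apply Nat.sInf_le
      simp only [Set.mem_setOf_eq, sum_take_mu]
      split_ifs <;> omega
    · by_contra hc
      push_neg at hc
      obtain ⟨j, hj, hjx⟩ : ∃ j < a, x < ((List.replicate a 1 ++ [n]).take (j+1)).sum := by
        have hne : {j | x < ((List.replicate a 1 ++ [n]).take (j + 1)).sum}.Nonempty := by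
          refine ⟨a, ?_⟩
          simp only [Set.mem_setOf_eq, sum_take_mu]
          split_ifs <;> omega
        have := Nat.sInf_mem hne
        exact ⟨_, hc, this⟩
      rw [sum_take_mu] at hjx
      split_ifs at hjx <;> omega

lemma blockIdx_la {m N x : ℕ} (hx : x < N) (hm : m ≤ N) :
    blockIdx [m, N - m] x = if x < m then 0 else 1 := by
  unfold blockIdx
  have h1 : ([m, N - m].take 1).sum = m := by simp
  have h2 : ∀ j, 1 ≤ j → ([m, N - m].take (j + 1)).sum = N := by
    intro j hj
    rw [List.take_of_length_le (by simp; omega)]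
    simp; omega
  split_ifs with h
  · rw [Nat.sInf_eq_zero]
    left
    simpa [Set.mem_setOf_eq] using h
  · apply le_antisymm
    · apply Nat.sInf_le
      simp only [Set.mem_setOf_eq, h2 1 le_rfl]
      omega
    · by_contra hc
      push_neg at hc
      interval_cases h' : sInf {j | x < ([m, N - m].take (j + 1)).sum}
      have h0 : 0 ∈ {j | x < ([m, N - m].take (j + 1)).sum} := by
        rw [← h']
        apply Nat.sInf_mem
        refine ⟨1, ?_⟩
        simp only [Set.mem_setOf_eq, h2 1 le_rfl]
        omega
      simp only [Set.mem_setOf_eq, h1] at h0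
      omega

end SP

namespace SP
open Equiv Finset

lemma mem_young_mu {a n : ℕ} {σ : Equiv.Perm (Fin (a + n))} :
    σ ∈ young (n := a + n) (List.replicate a 1 ++ [n]) ↔ ∀ x : Fin (a + n), x.1 < a → σ x = x := by
  constructor
  · intro hσ x hx
    have h := hσ x
    rw [blockIdx_mu x.2, blockIdx_mu (σ x).2] at h
    have : min (σ x).1 a = x.1 := by rw [h]; omega
    exact Fin.ext (by omega)
  · intro hσ x
    rcases lt_or_ge x.1 a with hx | hx
    · rw [hσ x hx]
    · have hge : a ≤ (σ x).1 := by
        by_contra hc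
        push_neg at hc
        have := hσ (σ x) hc
        have := σ.injective this
        omega
      rw [blockIdx_mu x.2, blockIdx_mu (σ x).2]
      omega

lemma mem_young_mu_ge {a n : ℕ} {σ : Equiv.Perm (Fin (a + n))}
    (hσ : σ ∈ young (n := a + n) (List.replicate a 1 ++ [n])) {x : Fin (a + n)} (hx : a ≤ x.1) :
    a ≤ (σ x).1 := by
  by_contra hc
  push_neg at hc
  have h1 := mem_young_mu.1 hσ (σ x) hc
  have := σ.injective h1
  omega

lemma mem_young_la {m N : ℕ} {σ : Equiv.Perm (Fin N)} (hm : m ≤ N) :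
    σ ∈ young (n := N) [m, N - m] ↔ ∀ x : Fin N, ((σ x).1 < m ↔ x.1 < m) := by
  constructor
  · intro hσ x
    have h := hσ x
    rw [blockIdx_la x.2 hm, blockIdx_la (σ x).2 hm] at h
    split_ifs at h <;> omega
  · intro hσ x
    rw [blockIdx_la x.2 hm, blockIdx_la (σ x).2 hm]
    have := hσ x
    split_ifs <;> omega

lemma sgen_mem_young {N : ℕ} {c : List ℕ} {i : Fin (N - 1)}
    (h : blockIdx c i.1 = blockIdx c (i.1 + 1)) : sgen i ∈ young (n := N) c := by
  intro x
  rw [sgen_eq]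
  rcases eq_or_ne x ⟨i.1, by have := i.2; omega⟩ with rfl | h1
  · rw [Equiv.swap_apply_left]
    exact h.symm
  · rcases eq_or_ne x ⟨i.1 + 1, by have := i.2; omega⟩ with rfl | h2
    · rw [Equiv.swap_apply_right]
      exact h
    · rw [Equiv.swap_apply_of_ne_of_ne h1 h2]

/-- chain lemma: adjacent increase on a convex predicate implies increase. -/
lemma lt_of_adj_chain {N : ℕ} (f : Fin N → Fin N) (P : ℕ → Prop)
    (hconv : ∀ i j k : ℕ, P i → P k → i ≤ j → j ≤ k → P j)
    (h : ∀ i : ℕ, (hi : i + 1 < N) → P i → P (i + 1) →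
      f ⟨i, by omega⟩ < f ⟨i + 1, hi⟩) :
    ∀ p q : Fin N, p < q → P p.1 → P q.1 → f p < f q := by
  have key : ∀ d (p : Fin N) (hq : p.1 + d + 1 < N), P p.1 → P (p.1 + d + 1) →
      f p < f ⟨p.1 + d + 1, hq⟩ := by
    intro d
    induction d with
    | zero =>
      intro p hq hp hq'
      have := h p.1 hq hp hq'
      convert this using 2
    | succ d ih =>
      intro p hq hp hq'
      have h1 : p.1 + d + 1 < N := by omega
      have hPm : P (p.1 + d + 1) := hconv _ _ _ hp hq' (by omega) (by omega)
      refine (ih p h1 hp hPm).trans ?_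
      have := h (p.1 + d + 1) (by omega) hPm (by
        have : p.1 + d + 1 + 1 = p.1 + (d + 1) + 1 := by omega
        rw [this]; exact hq')
      exact this
  intro p q hpq hp hq
  have hlt : p.1 < q.1 := hpq
  obtain ⟨d, hd⟩ : ∃ d, q.1 = p.1 + d + 1 := ⟨q.1 - p.1 - 1, by omega⟩
  have := key d p (by omega) hp (by rw [← hd]; exact hq)
  convert this using 2
  exact Fin.ext hd

end SP

namespace SP
open Equiv Finset

def Cond (a m : ℕ) {N : ℕ} (σ : Equiv.Perm (Fin N)) : Prop :=
  (∀ p q : Fin N, p < q → (q.1 < m ∨ m ≤ p.1) → σ p < σ q) ∧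
  (∀ p q : Fin N, p < q → a ≤ p.1 → σ⁻¹ p < σ⁻¹ q)


variable {N : ℕ}

lemma plen_mul_sgen {σ : Equiv.Perm (Fin N)} {i : Fin (N - 1)}
    (h : σ ⟨i.1 + 1, by have := i.2; omega⟩ < σ ⟨i.1, by have := i.2; omega⟩) :
    plen σ = plen (σ * sgen i) + 1 := by
  rw [plen_eq_nInv, plen_eq_nInv, sgen_eq i]
  exact nInv_mul_swap_desc rfl h

lemma plen_sgen_mul {σ : Equiv.Perm (Fin N)} {i : Fin (N - 1)}
    (h : σ⁻¹ ⟨i.1 + 1, by have := i.2; omega⟩ < σ⁻¹ ⟨i.1, by have := i.2; omega⟩) :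
    plen σ = plen (sgen i * σ) + 1 := by
  rw [plen_eq_nInv, plen_eq_nInv, sgen_eq i]
  have h1 : Equiv.swap (⟨i.1, by have := i.2; omega⟩ : Fin N) ⟨i.1 + 1, by have := i.2; omega⟩ * σ
      = (σ⁻¹ * Equiv.swap (⟨i.1, by have := i.2; omega⟩ : Fin N) ⟨i.1 + 1, by have := i.2; omega⟩)⁻¹ := by
    rw [mul_inv_rev, inv_inv, Equiv.swap_inv]
  rw [h1, nInv_inv]
  have := nInv_mul_swap_desc (σ := σ⁻¹) (a := (⟨i.1, by have := i.2; omega⟩ : Fin N))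
    (b := ⟨i.1 + 1, by have := i.2; omega⟩) rfl h
  rw [nInv_inv] at this
  exact this

end SP

namespace SP
open Equiv Finset
set_option maxHeartbeats 1000000 in
lemma minRep_eq (a bn m : ℕ) (hm : m ≤ a + bn) :
    minRep (n := a + bn) (young (List.replicate a 1 ++ [bn])) (young [m, a + bn - m]) =
      {σ | Cond a m σ} := by
  ext σ
  simp only [minRep, Set.mem_setOf_eq]
  constructor
  · intro hσ
    -- adjacent versions
    have adj1 : ∀ i : ℕ, (hi : i + 1 < a + bn) → i + 1 ≠ m →
        σ ⟨i, by omega⟩ < σ ⟨i + 1, hi⟩ := by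
      intro i hi him
      by_contra hc
      push_neg at hc
      have hdesc : σ ⟨i + 1, hi⟩ < σ ⟨i, by omega⟩ := by
        rcases lt_or_eq_of_le hc with h | h
        · exact h
        · exact absurd (σ.injective h) (by simp [Fin.ext_iff])
      have hγ : sgen (⟨i, by omega⟩ : Fin (a + bn - 1)) ∈ young (n := a + bn) [m, a + bn - m] := by
        apply sgen_mem_young (N := a + bn)
        show blockIdx [m, a + bn - m] i = blockIdx [m, a + bn - m] (i + 1)
        rw [blockIdx_la (x := i) (by omega) hm, blockIdx_la (x := i + 1) (by omega) hm]
        split_ifs <;> omega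
      have hle := hσ 1 (one_mem _) _ hγ
      rw [one_mul] at hle
      have := plen_mul_sgen (σ := σ) (i := (⟨i, by omega⟩ : Fin (a + bn - 1))) hdesc
      omega
    have adj2 : ∀ i : ℕ, (hi : i + 1 < a + bn) → a ≤ i →
        σ⁻¹ ⟨i, by omega⟩ < σ⁻¹ ⟨i + 1, hi⟩ := by
      intro i hi hia
      by_contra hc
      push_neg at hc
      have hdesc : σ⁻¹ ⟨i + 1, hi⟩ < σ⁻¹ ⟨i, by omega⟩ := by
        rcases lt_or_eq_of_le hc with h | h
        · exact h
        · exact absurd (σ⁻¹.injective h) (by simp [Fin.ext_iff])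
      have hβ : sgen (⟨i, by omega⟩ : Fin (a + bn - 1)) ∈ young (n := a + bn) (List.replicate a 1 ++ [bn]) := by
        apply sgen_mem_young (N := a + bn)
        show blockIdx (List.replicate a 1 ++ [bn]) i = blockIdx (List.replicate a 1 ++ [bn]) (i + 1)
        rw [blockIdx_mu (x := i) (by omega), blockIdx_mu (x := i + 1) (by omega)]
        omega
      have hle := hσ _ hβ 1 (one_mem _)
      rw [mul_one] at hle
      have := plen_sgen_mul (σ := σ) (i := (⟨i, by omega⟩ : Fin (a + bn - 1))) hdesc
      omega
    constructor
    · intro p q hpq hblock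
      rcases hblock with hq | hp
      · refine lt_of_adj_chain σ (· < m) (fun i j k hi hk h1 h2 => by omega) ?_ p q hpq
          (lt_trans hpq hq) hq
        intro i hi hPi hPi1
        exact adj1 i hi (by omega)
      · refine lt_of_adj_chain σ (m ≤ ·) (fun i j k hi hk h1 h2 => by omega) ?_ p q hpq
          hp (le_trans hp hpq.le)
        intro i hi hPi hPi1
        exact adj1 i hi (by omega)
    · intro p q hpq hp
      refine lt_of_adj_chain (fun x => σ⁻¹ x) (a ≤ ·) (fun i j k hi hk h1 h2 => by omega) ?_ p q hpq
        hp (le_trans hp hpq.le)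
      intro i hi hPi hPi1
      exact adj2 i hi hPi
  · rintro ⟨hC1, hC2⟩ β hβ γ hγ
    rw [plen_eq_nInv, plen_eq_nInv]
    unfold nInv
    apply Finset.card_le_card_of_injOn (fun p => (γ⁻¹ p.1, γ⁻¹ p.2))
    · intro p hp
      rw [Finset.mem_coe, mem_invs] at hp
      obtain ⟨hplt, hpv⟩ := hp
      have hq2 : ¬ p.2.1 < m := fun h => absurd (hC1 p.1 p.2 hplt (Or.inl h)) (not_lt.2 hpv.le)
      have hq1 : ¬ m ≤ p.1.1 := fun h => absurd (hC1 p.1 p.2 hplt (Or.inr h)) (not_lt.2 hpv.le)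
      have hs2a : (σ p.2).1 < a := by
        by_contra hc
        push_neg at hc
        have := hC2 (σ p.2) (σ p.1) hpv hc
        simp only [Perm.inv_def, Equiv.symm_apply_apply] at this
        exact absurd hplt (not_lt.2 this.le)
      have hγinv := (mem_young_la (N := a + bn) (by omega)).1 ((young _).inv_mem hγ)
      have hord : γ⁻¹ p.1 < γ⁻¹ p.2 := by
        have h1 : (γ⁻¹ p.1).1 < m := (hγinv p.1).2 (by omega)
        have h2 : ¬ (γ⁻¹ p.2).1 < m := fun h => hq2 ((hγinv p.2).1 h)
        rw [Fin.lt_def]; omega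
      have hβfix : β (σ p.2) = σ p.2 := mem_young_mu.1 hβ (σ p.2) hs2a
      have hval : β (σ p.2) < β (σ p.1) := by
        rcases lt_or_ge (σ p.1).1 a with h | h
        · rw [hβfix, mem_young_mu.1 hβ (σ p.1) h]
          exact hpv
        · have := mem_young_mu_ge hβ h
          rw [hβfix, Fin.lt_def]
          omega
      rw [Finset.mem_coe, mem_invs]
      refine ⟨hord, ?_⟩
      simp only [Perm.mul_apply, Perm.inv_def, Equiv.apply_symm_apply]
      exact hval
    · intro p hp q hq h
      rw [Prod.mk.injEq] at h
      exact Prod.ext (γ⁻¹.injective h.1) (γ⁻¹.injective h.2)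

end SP

namespace SP
open Equiv Finset
variable {N : ℕ}

lemma pincl_castSucc (σ : Equiv.Perm (Fin N)) (x : Fin N) :
    pincl σ (Fin.castSucc x) = Fin.castSucc (σ x) :=
  σ.viaEmbedding_apply Fin.castSuccEmb x

lemma pincl_last (σ : Equiv.Perm (Fin N)) : pincl σ (Fin.last N) = Fin.last N := by
  apply Equiv.Perm.viaEmbedding_apply_of_notMem
  rintro ⟨y, hy⟩
  exact absurd hy (Fin.castSucc_lt_last y).ne

lemma pincl_inv (σ : Equiv.Perm (Fin N)) : (pincl σ)⁻¹ = pincl σ⁻¹ := by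
  unfold pincl
  rw [← Equiv.Perm.viaEmbeddingHom_apply, ← Equiv.Perm.viaEmbeddingHom_apply, map_inv]

lemma pincl_injective : Function.Injective (pincl (N := N)) := by
  intro σ τ h
  apply Equiv.Perm.viaEmbeddingHom_injective (Fin.castSuccEmb (n := N))
  rw [Equiv.Perm.viaEmbeddingHom_apply, Equiv.Perm.viaEmbeddingHom_apply]
  exact h

noncomputable def restr (τ : Equiv.Perm (Fin (N + 1))) (hτ : τ (Fin.last N) = Fin.last N) :
    Equiv.Perm (Fin N) :=
  Equiv.ofBijective (fun x => ⟨(τ (Fin.castSucc x)).1, by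
      have h1 : τ (Fin.castSucc x) ≠ Fin.last N := fun h =>
        absurd (τ.injective (h.trans hτ.symm)) (Fin.castSucc_lt_last x).ne
      have h2 : (τ (Fin.castSucc x)).1 ≠ N := fun h => h1 (Fin.ext h)
      have h3 := (τ (Fin.castSucc x)).isLt
      omega⟩)
    (Finite.injective_iff_bijective.1 (fun x y h => by
      have hv : (τ (Fin.castSucc x)).1 = (τ (Fin.castSucc y)).1 := by simpa [Fin.ext_iff] using h
      exact Fin.castSucc_injective N (τ.injective (Fin.ext hv))))

lemma pincl_restr (τ : Equiv.Perm (Fin (N + 1))) (hτ : τ (Fin.last N) = Fin.last N) :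
    pincl (restr τ hτ) = τ := by
  apply Equiv.ext
  intro x
  rcases Fin.eq_castSucc_or_eq_last x with ⟨y, rfl⟩ | rfl
  · rw [pincl_castSucc]
    exact Fin.ext rfl
  · rw [pincl_last, hτ]

lemma cond_pincl_iff {a m : ℕ} {σ : Equiv.Perm (Fin N)} :
    Cond a m (pincl σ) ↔ Cond a m σ := by
  have hval : ∀ x : Fin N, (pincl σ (Fin.castSucc x)).1 = (σ x).1 := by
    intro x; rw [pincl_castSucc]; rfl
  have hvali : ∀ x : Fin N, ((pincl σ)⁻¹ (Fin.castSucc x)).1 = (σ⁻¹ x).1 := by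
    intro x; rw [pincl_inv, pincl_castSucc]; rfl
  constructor
  · rintro ⟨hC1, hC2⟩
    constructor
    · intro p q hpq hb
      have := hC1 (Fin.castSucc p) (Fin.castSucc q) (by rwa [Fin.castSucc_lt_castSucc_iff]) hb
      rw [Fin.lt_def] at this ⊢
      rwa [hval, hval] at this
    · intro p q hpq hb
      have := hC2 (Fin.castSucc p) (Fin.castSucc q) (by rwa [Fin.castSucc_lt_castSucc_iff]) hb
      rw [Fin.lt_def] at this ⊢
      rwa [hvali, hvali] at this
  · rintro ⟨hC1, hC2⟩
    constructor
    · intro p q hpq hb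
      rcases Fin.eq_castSucc_or_eq_last q with ⟨qq, rfl⟩ | rfl
      · have hp : p.1 < N := lt_of_lt_of_le hpq (by exact (Fin.castSucc_lt_last qq).le)
        obtain ⟨pp, rfl⟩ : ∃ pp : Fin N, p = Fin.castSucc pp :=
          ⟨⟨p.1, by have := (Fin.castSucc_lt_last qq); have := hpq; rw [Fin.lt_def] at *; simp at *; omega⟩, Fin.ext rfl⟩
        have := hC1 pp qq (by rwa [Fin.castSucc_lt_castSucc_iff] at hpq) hb
        rw [Fin.lt_def] at this ⊢
        rwa [hval, hval]
      · obtain ⟨pp, rfl⟩ : ∃ pp : Fin N, p = Fin.castSucc pp :=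
          ⟨⟨p.1, by rw [Fin.lt_def] at hpq; simpa using hpq⟩, Fin.ext rfl⟩
        rw [pincl_last]
        rw [pincl_castSucc]
        exact Fin.castSucc_lt_last _
    · intro p q hpq hb
      rcases Fin.eq_castSucc_or_eq_last q with ⟨qq, rfl⟩ | rfl
      · obtain ⟨pp, rfl⟩ : ∃ pp : Fin N, p = Fin.castSucc pp :=
          ⟨⟨p.1, by have := Fin.castSucc_lt_last qq; rw [Fin.lt_def] at *; omega⟩, Fin.ext rfl⟩
        have := hC2 pp qq (by rwa [Fin.castSucc_lt_castSucc_iff] at hpq) hb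
        rw [Fin.lt_def] at this ⊢
        rwa [hvali, hvali]
      · obtain ⟨pp, rfl⟩ : ∃ pp : Fin N, p = Fin.castSucc pp :=
          ⟨⟨p.1, by rw [Fin.lt_def] at hpq; simpa using hpq⟩, Fin.ext rfl⟩
        have h1 : (pincl σ)⁻¹ (Fin.last N) = Fin.last N := by
          rw [pincl_inv, pincl_last]
        rw [h1, pincl_inv, pincl_castSucc]
        exact Fin.castSucc_lt_last _

lemma cond_last {a m bn : ℕ} (hm : m ≤ bn) {τ : Equiv.Perm (Fin (a + bn + 1))}
    (h : Cond a m τ) : τ (Fin.last (a + bn)) = Fin.last (a + bn) := by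
  obtain ⟨hC1, hC2⟩ := h
  set p := τ⁻¹ (Fin.last (a + bn)) with hp
  rcases eq_or_ne p (Fin.last (a + bn)) with he | hne
  · conv_lhs => rw [← he, hp]
    exact τ.apply_symm_apply _
  · exfalso
    have hplt : p < Fin.last (a + bn) := by
      rw [Fin.lt_def]
      have h1 := Fin.val_lt_last hne
      exact h1
    have hτp : τ p = Fin.last (a + bn) := τ.apply_symm_apply _
    rcases le_or_gt m p.1 with hc | hc
    · have := hC1 p (Fin.last (a + bn)) hplt (Or.inr hc)
      rw [hτp] at this
      exact absurd this (not_lt.2 (Fin.le_last _))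
    · have key : ∀ d : ℕ, ∀ y : Fin (a + bn + 1), a + d ≤ y.1 → d ≤ (τ⁻¹ y).1 := by
        intro d
        induction d with
        | zero => intro y _; omega
        | succ d ih =>
          intro y hy
          have hx : y.1 - 1 < a + bn + 1 := by omega
          have h1 := ih ⟨y.1 - 1, hx⟩ (by simp; omega)
          have h2 := hC2 ⟨y.1 - 1, hx⟩ y (by rw [Fin.lt_def]; show y.1 - 1 < y.1; omega) (by simp; omega)
          rw [Fin.lt_def] at h2
          omega
      have hbn := key bn (Fin.last (a + bn)) (by simp)
      rw [← hp] at hbn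
      omega

lemma cond_image (a m bn : ℕ) (hm : m ≤ bn) :
    {σ : Equiv.Perm (Fin (a + bn + 1)) | Cond a m σ} =
      pincl '' {σ : Equiv.Perm (Fin (a + bn)) | Cond a m σ} := by
  ext τ
  simp only [Set.mem_setOf_eq, Set.mem_image]
  constructor
  · intro hτ
    have hlast := cond_last hm hτ
    refine ⟨restr τ hlast, ?_, pincl_restr τ hlast⟩
    rw [← cond_pincl_iff (a := a) (m := m), pincl_restr]
    exact hτ
  · rintro ⟨σ, hσ, rfl⟩
    exact cond_pincl_iff.2 hσ

lemma minRep_eq_succ (a bn m : ℕ) (hm : m ≤ a + bn + 1) :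
    minRep (n := a + bn + 1) (young (List.replicate a 1 ++ [bn + 1]))
        (young [m, a + bn + 1 - m]) = {σ : Equiv.Perm (Fin (a + bn + 1)) | Cond a m σ} :=
  minRep_eq a (bn + 1) m hm

end SP

/-- With `λ_n = (m, a+n-m)` and `μ_n = (1^a, n)`, for `n ≥ m` the number
of minimal-length double coset representatives is independent of `n`. -/
theorem minRep_card_stable (a m n : ℕ) (h : m ≤ n) :
    (minRep (n := a + n)
        (young (List.replicate a 1 ++ [n])) (young [m, a + n - m])).ncard =
      (minRep (n := a + n + 1)
        (young (List.replicate a 1 ++ [n + 1])) (young [m, a + n + 1 - m])).ncard := by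
  rw [SP.minRep_eq a n m (by omega), SP.minRep_eq_succ a n m (by omega),
    SP.cond_image a m n h, Set.ncard_image_of_injective _ SP.pincl_injective]
end

section
/- Fix $a, m, n \geq 0$ with $m \le a + n$. Let $\lambda_n = (m, a+n-m)$ and $\mu_n = (1^a, n)$ be compositions of $a+n$. For every minimal-length double coset representative $\sigma \in \mathscr{D}_{\mu_n, \lambda_n}$, there exists $k \le m$ such that $\sigma^{-1} \mathfrak{S}_{\mu_n} \sigma \cap \mathfrak{S}_{\{1,\ldots,m\}} = \mathfrak{S}_{\{m-k+1,\ldots,m\}}$. -/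
section Aux

variable {N : ℕ}

def ca (i : Fin (N - 1)) : Fin N := ⟨i.1, by have := i.2; omega⟩
def cb (i : Fin (N - 1)) : Fin N := ⟨i.1 + 1, by have := i.2; omega⟩

lemma sgen_eq (i : Fin (N - 1)) : sgen i = Equiv.swap (ca i) (cb i) := rfl

lemma ca_lt_cb (i : Fin (N - 1)) : ca i < cb i := by simp [ca, cb, Fin.lt_def]

lemma ca_ne_cb (i : Fin (N - 1)) : ca i ≠ cb i := ne_of_lt (ca_lt_cb i)

lemma sgen_ca (i : Fin (N - 1)) : sgen i (ca i) = cb i := by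
  rw [sgen_eq]; exact Equiv.swap_apply_left _ _

lemma sgen_cb (i : Fin (N - 1)) : sgen i (cb i) = ca i := by
  rw [sgen_eq]; exact Equiv.swap_apply_right _ _

lemma sgen_invol (i : Fin (N - 1)) (x : Fin N) : sgen i (sgen i x) = x := by
  rw [sgen_eq]; exact Equiv.swap_apply_self _ _ _

lemma sgen_mul_self (i : Fin (N - 1)) : sgen i * sgen i = 1 := by
  rw [sgen_eq]; exact Equiv.swap_mul_self _ _

lemma sgen_lt {i : Fin (N - 1)} {x y : Fin N} (hxy : x < y)
    (hne : ¬(x = ca i ∧ y = cb i)) : sgen i x < sgen i y := by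
  have hcav : (ca i : Fin N).1 = i.1 := rfl
  have hcbv : (cb i : Fin N).1 = i.1 + 1 := rfl
  rw [sgen_eq, Equiv.swap_apply_def, Equiv.swap_apply_def]
  split_ifs <;>
    (simp only [Fin.lt_def, Fin.ext_iff, hcav, hcbv, not_and] at *) <;> omega

def invSet (σ : Equiv.Perm (Fin N)) : Finset (Fin N × Fin N) :=
  Finset.univ.filter (fun p => p.1 < p.2 ∧ σ p.2 < σ p.1)

lemma mem_invSet {σ : Equiv.Perm (Fin N)} {p : Fin N × Fin N} :
    p ∈ invSet σ ↔ p.1 < p.2 ∧ σ p.2 < σ p.1 := by simp [invSet]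

def pinv (σ : Equiv.Perm (Fin N)) : ℕ := (invSet σ).card

lemma invSet_erase_eq (σ : Equiv.Perm (Fin N)) (i : Fin (N - 1)) :
    (invSet (σ * sgen i)).erase (ca i, cb i) =
      ((invSet σ).erase (ca i, cb i)).map (Equiv.prodCongr (sgen i) (sgen i)).toEmbedding := by
  ext p
  simp only [Finset.mem_erase, mem_invSet, Finset.mem_map, Equiv.coe_toEmbedding,
    Equiv.prodCongr_apply, Prod.map]
  constructor
  · rintro ⟨hne, hlt, hinv⟩
    refine ⟨(sgen i p.1, sgen i p.2), ⟨?_, ?_, ?_⟩, ?_⟩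
    · intro h
      have h1 : sgen i p.1 = ca i := congrArg Prod.fst h
      have h2 : sgen i p.2 = cb i := congrArg Prod.snd h
      have : p.1 = cb i := by rw [← sgen_invol i p.1, h1, sgen_ca]
      have : p.2 = ca i := by rw [← sgen_invol i p.2, h2, sgen_cb]
      have := ca_lt_cb i
      rw [‹p.1 = cb i›, ‹p.2 = ca i›] at hlt
      exact absurd (hlt.trans this) (lt_irrefl _)
    · refine sgen_lt hlt ?_
      intro ⟨h1, h2⟩; exact hne (Prod.ext h1 h2)
    · simpa [Equiv.Perm.mul_apply] using hinv
    · exact Prod.ext (sgen_invol i p.1) (sgen_invol i p.2)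
  · rintro ⟨q, ⟨hne, hlt, hinv⟩, hq⟩
    have h1 : p.1 = sgen i q.1 := by rw [← hq]
    have h2 : p.2 = sgen i q.2 := by rw [← hq]
    refine ⟨?_, ?_, ?_⟩
    · intro h
      have e1 : p.1 = ca i := congrArg Prod.fst h
      have e2 : p.2 = cb i := congrArg Prod.snd h
      have : q.1 = cb i := by rw [← sgen_invol i q.1, ← h1, e1, sgen_ca]
      have : q.2 = ca i := by rw [← sgen_invol i q.2, ← h2, e2, sgen_cb]
      have := ca_lt_cb i
      rw [‹q.1 = cb i›, ‹q.2 = ca i›] at hlt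
      exact absurd (hlt.trans this) (lt_irrefl _)
    · rw [h1, h2]
      refine sgen_lt hlt ?_
      intro ⟨e1, e2⟩; exact hne (Prod.ext e1 e2)
    · rw [h1, h2]
      simpa [Equiv.Perm.mul_apply, sgen_invol] using hinv

lemma pair_mem_invSet (σ : Equiv.Perm (Fin N)) (i : Fin (N - 1)) :
    (ca i, cb i) ∈ invSet σ ↔ σ (cb i) < σ (ca i) := by
  simp [mem_invSet, ca_lt_cb]

lemma pair_mem_invSet_mul (σ : Equiv.Perm (Fin N)) (i : Fin (N - 1)) :
    (ca i, cb i) ∈ invSet (σ * sgen i) ↔ σ (ca i) < σ (cb i) := by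
  simp [mem_invSet, ca_lt_cb, Equiv.Perm.mul_apply, sgen_ca, sgen_cb]

lemma pinv_asc {σ : Equiv.Perm (Fin N)} {i : Fin (N - 1)} (h : σ (ca i) < σ (cb i)) :
    pinv (σ * sgen i) = pinv σ + 1 := by
  have hp1 : (ca i, cb i) ∈ invSet (σ * sgen i) := (pair_mem_invSet_mul σ i).mpr h
  have hp2 : (ca i, cb i) ∉ invSet σ := by
    rw [pair_mem_invSet]; exact fun h' => absurd (h.trans h') (lt_irrefl _)
  have hc := Finset.card_erase_add_one hp1
  rw [invSet_erase_eq, Finset.card_map, Finset.erase_eq_of_notMem hp2] at hc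
  unfold pinv; omega

lemma pinv_desc {σ : Equiv.Perm (Fin N)} {i : Fin (N - 1)} (h : σ (cb i) < σ (ca i)) :
    pinv σ = pinv (σ * sgen i) + 1 := by
  have hp1 : (ca i, cb i) ∈ invSet σ := (pair_mem_invSet σ i).mpr h
  have hp2 : (ca i, cb i) ∉ invSet (σ * sgen i) := by
    rw [pair_mem_invSet_mul]; exact fun h' => absurd (h.trans h') (lt_irrefl _)
  have hc := Finset.card_erase_add_one hp1
  have h2 : ((invSet (σ * sgen i)).erase (ca i, cb i)).card =
      ((invSet σ).erase (ca i, cb i)).card := by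
    rw [invSet_erase_eq, Finset.card_map]
  rw [Finset.erase_eq_of_notMem hp2] at h2
  unfold pinv; omega

lemma sgen_apply_ne (σ : Equiv.Perm (Fin N)) (i : Fin (N - 1)) :
    σ (ca i) ≠ σ (cb i) := fun h => ca_ne_cb i (σ.injective h)

lemma pinv_one : pinv (1 : Equiv.Perm (Fin N)) = 0 := by
  unfold pinv
  rw [Finset.card_eq_zero]
  ext p
  simp only [mem_invSet, Equiv.Perm.one_apply, Finset.notMem_empty, iff_false]
  rintro ⟨h1, h2⟩; exact absurd (h1.trans h2) (lt_irrefl _)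

lemma wprod_append (w : List (Fin (N - 1))) (i : Fin (N - 1)) :
    wprod (w ++ [i]) = wprod w * sgen i := by
  simp [wprod]

lemma pinv_le_length (w : List (Fin (N - 1))) : pinv (wprod w) ≤ w.length := by
  induction w using List.reverseRecOn with
  | nil => simp [wprod, pinv_one]
  | append_singleton w i ih =>
    rw [wprod_append]
    rcases lt_or_gt_of_ne (sgen_apply_ne (wprod w) i) with h | h
    · rw [pinv_asc h]; simpa using Nat.add_le_add_right ih 1
    · have := pinv_desc h
      simp only [List.length_append, List.length_singleton]
      omega

lemma chain_lt (σ : Equiv.Perm (Fin N)) (m : ℕ)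
    (h : ∀ i : Fin (N - 1), i.1 + 1 < m → σ (ca i) < σ (cb i)) :
    ∀ x y : Fin N, x < y → y.1 < m → σ x < σ y := by
  have key : ∀ (t : ℕ) (x : Fin N) (hb : x.1 + t + 1 < N), x.1 + t + 1 < m →
      σ x < σ ⟨x.1 + t + 1, hb⟩ := by
    intro t
    induction t with
    | zero =>
      intro x hb hm
      have hi : x.1 < N - 1 := by omega
      have := h ⟨x.1, hi⟩ (by simpa using hm)
      have e1 : ca ⟨x.1, hi⟩ = x := by simp [ca]
      have e2 : cb ⟨x.1, hi⟩ = ⟨x.1 + 0 + 1, hb⟩ := by simp [cb]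
      rwa [e1, e2] at this
    | succ t ih =>
      intro x hb hm
      have h1 : x.1 + t + 1 < N := by omega
      have h2 := ih x h1 (by omega)
      have hi : x.1 + t + 1 < N - 1 := by omega
      have h3 := h ⟨x.1 + t + 1, hi⟩ (by simp; omega)
      have e1 : ca ⟨x.1 + t + 1, hi⟩ = ⟨x.1 + t + 1, h1⟩ := by simp [ca]
      have e2 : cb ⟨x.1 + t + 1, hi⟩ = ⟨x.1 + (t + 1) + 1, hb⟩ := by
        apply Fin.ext; simp [cb]; omega
      rw [e1, e2] at h3
      exact h2.trans h3
  intro x y hxy hym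
  have hxyv : x.1 < y.1 := hxy
  have hb : x.1 + (y.1 - x.1 - 1) + 1 < N := by have := y.2; omega
  have hy : y = ⟨x.1 + (y.1 - x.1 - 1) + 1, hb⟩ := by
    apply Fin.ext; simp; omega
  rw [hy]
  exact key _ x hb (by omega)

lemma eq_one_of_no_descent (σ : Equiv.Perm (Fin N))
    (h : ∀ i : Fin (N - 1), σ (ca i) < σ (cb i)) : σ = 1 := by
  have hsm : StrictMono σ := by
    intro x y hxy
    exact chain_lt σ N (fun i _ => h i) x y hxy y.2
  have hid : StrictMono (id : Fin N → Fin N) := strictMono_id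
  have hr : Set.range σ = Set.range (id : Fin N → Fin N) := by
    simp [σ.surjective.range_eq]
  haveI : WellFoundedLT (Fin N) := inferInstance
  have := (StrictMono.range_inj (β := Fin N) (γ := Fin N) hsm hid).mp hr
  exact Equiv.ext fun x => congrFun this x

lemma exists_reduced_word : ∀ (c : ℕ) (σ : Equiv.Perm (Fin N)), pinv σ = c →
    ∃ w : List (Fin (N - 1)), wprod w = σ ∧ w.length = c := by
  intro c
  induction c using Nat.strong_induction_on with
  | _ c ih =>
    intro σ hc
    by_cases hdesc : ∃ i : Fin (N - 1), σ (cb i) < σ (ca i)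
    · obtain ⟨i, hi⟩ := hdesc
      have h1 := pinv_desc hi
      obtain ⟨w, hw, hl⟩ := ih (pinv (σ * sgen i)) (by omega) _ rfl
      refine ⟨w ++ [i], ?_, by simp [hl]; omega⟩
      rw [wprod_append, hw, mul_assoc, sgen_mul_self, mul_one]
    · push_neg at hdesc
      have hasc : ∀ i : Fin (N - 1), σ (ca i) < σ (cb i) := by
        intro i
        exact lt_of_le_of_ne (hdesc i) (sgen_apply_ne σ i)
      have := eq_one_of_no_descent σ hasc
      subst this
      rw [pinv_one] at hc
      exact ⟨[], by simp [wprod], by simp [← hc]⟩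

lemma plen_eq_pinv (σ : Equiv.Perm (Fin N)) : plen σ = pinv σ := by
  obtain ⟨w, hw, hl⟩ := exists_reduced_word (pinv σ) σ rfl
  apply le_antisymm
  · exact Nat.sInf_le ⟨w, hw, hl⟩
  · have hne : {l | ∃ w : List (Fin (N - 1)), wprod w = σ ∧ w.length = l}.Nonempty :=
      ⟨pinv σ, w, hw, hl⟩
    obtain ⟨w', hw', hl'⟩ := Nat.sInf_mem hne
    rw [plen, ← hl', ← hw']
    exact pinv_le_length w'

lemma plen_desc {σ : Equiv.Perm (Fin N)} {i : Fin (N - 1)} (h : σ (cb i) < σ (ca i)) :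
    plen (σ * sgen i) < plen σ := by
  rw [plen_eq_pinv, plen_eq_pinv]
  have := pinv_desc h
  omega

end Aux

section Blocks

lemma mem_young {N : ℕ} {c : List ℕ} {σ : Equiv.Perm (Fin N)} :
    σ ∈ young c ↔ ∀ x : Fin N, blockIdx c (σ x).1 = blockIdx c x.1 := Iff.rfl

lemma mem_SIntv {N s t : ℕ} {σ : Equiv.Perm (Fin N)} :
    σ ∈ (SIntv s t : Subgroup (Equiv.Perm (Fin N))) ↔
      ∀ x : Fin N, x.1 + 1 < s ∨ t < x.1 + 1 → σ x = x := Iff.rfl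

lemma blockIdx_two_lt {N m x : ℕ} (hx : x < m) : blockIdx [m, N - m] x = 0 := by
  apply Nat.sInf_eq_zero.mpr
  left
  show x < ([m, N - m].take 1).sum
  simpa using hx

lemma blockIdx_two_ge {N m x : ℕ} (hm : m ≤ N) (hx1 : m ≤ x) (hx2 : x < N) :
    blockIdx [m, N - m] x = 1 := by
  have h1 : 1 ∈ {j | x < ([m, N - m].take (j + 1)).sum} := by
    show x < ([m, N - m].take 2).sum
    simp; omega
  have h0 : 0 ∉ {j | x < ([m, N - m].take (j + 1)).sum} := by
    show ¬ x < ([m, N - m].take 1).sum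
    simp; omega
  have hle := Nat.sInf_le h1
  have hmem := Nat.sInf_mem (⟨1, h1⟩ : {j | x < ([m, N - m].take (j + 1)).sum}.Nonempty)
  have hne : sInf {j | x < ([m, N - m].take (j + 1)).sum} ≠ 0 := fun h => h0 (h ▸ hmem)
  unfold blockIdx
  omega

lemma mu_take_sum (a n j : ℕ) :
    ((List.replicate a 1 ++ [n]).take (j + 1)).sum = if j + 1 ≤ a then j + 1 else a + n := by
  split_ifs with h
  · rw [List.take_append_of_le_length (by simpa using h), List.take_replicate]
    simp [Nat.min_eq_left h]
  · rw [List.take_of_length_le (by simp; omega)]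
    simp

lemma blockIdx_mu_lt {a n x : ℕ} (hx : x < a) :
    blockIdx (List.replicate a 1 ++ [n]) x = x := by
  have hxS : x ∈ {j | x < ((List.replicate a 1 ++ [n]).take (j + 1)).sum} := by
    show x < _
    rw [mu_take_sum]
    split <;> omega
  have hle := Nat.sInf_le hxS
  have hmem := Nat.sInf_mem (⟨x, hxS⟩ :
    {j | x < ((List.replicate a 1 ++ [n]).take (j + 1)).sum}.Nonempty)
  unfold blockIdx
  by_contra hne
  have hlt : sInf {j | x < ((List.replicate a 1 ++ [n]).take (j + 1)).sum} < x := by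
    unfold blockIdx at *; omega
  rw [Set.mem_setOf_eq, mu_take_sum] at hmem
  split_ifs at hmem <;> omega

lemma blockIdx_mu_ge {a n x : ℕ} (hx1 : a ≤ x) (hx2 : x < a + n) :
    blockIdx (List.replicate a 1 ++ [n]) x = a := by
  have hxS : a ∈ {j | x < ((List.replicate a 1 ++ [n]).take (j + 1)).sum} := by
    show x < _
    rw [mu_take_sum]
    simp; omega
  have hle := Nat.sInf_le hxS
  have hmem := Nat.sInf_mem (⟨a, hxS⟩ :
    {j | x < ((List.replicate a 1 ++ [n]).take (j + 1)).sum}.Nonempty)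
  unfold blockIdx
  by_contra hne
  have hlt : sInf {j | x < ((List.replicate a 1 ++ [n]).take (j + 1)).sum} < a := by
    unfold blockIdx at *; omega
  rw [Set.mem_setOf_eq, mu_take_sum] at hmem
  split_ifs at hmem <;> omega

lemma mem_young_mu {a n : ℕ} {β : Equiv.Perm (Fin (a + n))} :
    β ∈ young (n := a + n) (List.replicate a 1 ++ [n]) ↔
      ∀ x : Fin (a + n), x.1 < a → β x = x := by
  rw [mem_young]
  constructor
  · intro h x hx
    have hb := h x
    rw [blockIdx_mu_lt hx] at hb
    rcases Nat.lt_or_ge (β x).1 a with h1 | h1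
    · rw [blockIdx_mu_lt h1] at hb
      exact Fin.ext hb
    · rw [blockIdx_mu_ge h1 (β x).2] at hb
      omega
  · intro h x
    rcases Nat.lt_or_ge x.1 a with h1 | h1
    · rw [h x h1]
    · rw [blockIdx_mu_ge h1 x.2]
      have h2 : a ≤ (β x).1 := by
        by_contra h3
        push_neg at h3
        have := h (β x) h3
        have := β.injective this
        omega
      rw [blockIdx_mu_ge h2 (β x).2]

lemma sgen_mem_young_two {N m : ℕ} (hm : m ≤ N) {i : Fin (N - 1)} (hi : i.1 + 1 < m) :
    sgen i ∈ young (n := N) [m, N - m] := by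
  rw [mem_young]
  intro x
  have key : ∀ y : Fin N, y.1 < m → blockIdx [m, N - m] y.1 = 0 := fun y hy =>
    blockIdx_two_lt hy
  have key2 : ∀ y : Fin N, m ≤ y.1 → blockIdx [m, N - m] y.1 = 1 := fun y hy =>
    blockIdx_two_ge hm hy y.2
  by_cases h1 : x = ca i
  · rw [h1, sgen_ca, key _ (by show i.1 + 1 < m; exact hi), key _ (by show i.1 < m; omega)]
  · by_cases h2 : x = cb i
    · rw [h2, sgen_cb, key _ (by show i.1 < m; omega), key _ (by show i.1 + 1 < m; exact hi)]
    · rw [sgen_eq, Equiv.swap_apply_of_ne_of_ne h1 h2]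

end Blocks

/-- For `λ_n = (m, a+n-m)`, `μ_n = (1^a, n)` and a minimal-length double
coset representative `σ ∈ 𝒟_{μ_n, λ_n}`, there is `kk ≤ m` with
`σ⁻¹ S_{μ_n} σ ∩ S_{{1,…,m}} = S_{{m-kk+1,…,m}}`. -/
theorem conj_intersection_interval (a m n : ℕ) (hm : m ≤ a + n)
    (σ : Equiv.Perm (Fin (a + n)))
    (hσ : σ ∈ minRep (young (List.replicate a 1 ++ [n])) (young [m, a + n - m])) :
    ∃ kk ≤ m,
      Subgroup.map (MulAut.conj σ⁻¹).toMonoidHom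
          (young (n := a + n) (List.replicate a 1 ++ [n])) ⊓ SIntv 1 m =
        SIntv (m - kk + 1) m := by
  classical
  have hadj : ∀ i : Fin (a + n - 1), i.1 + 1 < m → σ (ca i) < σ (cb i) := by
    intro i hi
    by_contra hle
    push_neg at hle
    have hdesc : σ (cb i) < σ (ca i) :=
      lt_of_le_of_ne hle (fun h => sgen_apply_ne σ i h.symm)
    have h1 := hσ 1 (one_mem _) (sgen i) (sgen_mem_young_two hm hi)
    rw [one_mul] at h1
    have h2 := plen_desc hdesc
    omega
  have hmono := chain_lt σ m hadj
  set S : Set ℕ := {y | m ≤ y ∨ ∃ h : y < a + n, a ≤ (σ ⟨y, h⟩).1} with hS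
  have hmS : m ∈ S := Or.inl le_rfl
  have hdm : sInf S ≤ m := Nat.sInf_le hmS
  have hdS : sInf S ∈ S := Nat.sInf_mem ⟨m, hmS⟩
  set d := sInf S with hd
  refine ⟨m - d, Nat.sub_le _ _, ?_⟩
  have hmd : m - (m - d) = d := by omega
  rw [hmd]
  have key1 : ∀ y : Fin (a + n), y.1 < d → (σ y).1 < a := by
    intro y hy
    by_contra h
    push_neg at h
    have hyS : y.1 ∈ S := Or.inr ⟨y.2, by simpa using h⟩
    have := Nat.sInf_le hyS
    omega
  have key2 : ∀ y : Fin (a + n), d ≤ y.1 → y.1 < m → a ≤ (σ y).1 := by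
    intro y h1 h2
    rcases hdS with hd1 | ⟨hdlt, hda⟩
    · omega
    · rcases eq_or_lt_of_le h1 with he | hlt
      · have : (⟨d, hdlt⟩ : Fin (a + n)) = y := Fin.ext he
        rw [← this]
        exact hda
      · have hlt2 : (⟨d, hdlt⟩ : Fin (a + n)) < y := hlt
        have := hmono ⟨d, hdlt⟩ y hlt2 h2
        exact le_of_lt (lt_of_le_of_lt hda this)
  ext τ
  simp only [Subgroup.mem_inf, Subgroup.mem_map, MulEquiv.coe_toMonoidHom, MulAut.conj_apply,
    inv_inv]
  constructor
  · rintro ⟨⟨β, hβ, hβτ⟩, hτ⟩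
    rw [mem_SIntv]
    intro x hx
    rcases hx with h | h
    · have hxd : x.1 < d := by omega
      have hfix : β (σ x) = σ x := (mem_young_mu.mp hβ) (σ x) (key1 x hxd)
      have : τ x = σ⁻¹ (β (σ x)) := by rw [← hβτ]; rfl
      rw [this, hfix]
      simp
    · exact (mem_SIntv.mp hτ) x (Or.inr h)
  · intro hτ
    have hτ' := mem_SIntv.mp hτ
    constructor
    · refine ⟨σ * τ * σ⁻¹, ?_, by group⟩
      rw [mem_young_mu]
      intro x hx
      set y := σ⁻¹ x with hy
      have hσy : σ y = x := by simp [hy]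
      have hyfix : τ y = y := by
        rcases Nat.lt_or_ge y.1 d with h1 | h1
        · exact hτ' y (Or.inl (by omega))
        · rcases Nat.lt_or_ge y.1 m with h2 | h2
          · have := key2 y h1 h2
            rw [hσy] at this
            omega
          · exact hτ' y (Or.inr (by omega))
      show σ (τ (σ⁻¹ x)) = x
      rw [← hy, hyfix, hσy]
    · rw [mem_SIntv]
      intro x hx
      rcases hx with h | h
      · omega
      · exact hτ' x (Or.inr h)
end
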